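/- The set A_g of allowed globules configurations satisfies the Uniform Exterior Sphere property UES(α) with constant α = r_-²/(2 r_+ n √n). -/

import Mathlib

open scoped RealInnerProductSpace

noncomputable section

variable {H : Type*} [NormedAddCommGroup H] [InnerProductSpace ℝ H]

/-- The set `N^D_{x,α}` of inward unit normal vectors to `D` at `x` with constant `α`. -/
def normalSet (D : Set H) (x : H) (α : ℝ) : Set H :=
  {v | ‖v‖ = 1 ∧ Metric.ball (x - α • v) α ∩ D = ∅}

/-- The set `N^D_x = ⋃_{α>0} N^D_{x,α}` of inward unit normal vectors to `D` at `x`. -/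
def normalCone (D : Set H) (x : H) : Set H :=
  ⋃ α ∈ Set.Ioi (0 : ℝ), normalSet D x α

/-- `D` satisfies the Uniform Exterior Sphere property with constant `α`. -/
def UES (D : Set H) (α : ℝ) : Prop :=
  ∀ x ∈ frontier D, normalCone D x = normalSet D x α ∧ (normalSet D x α).Nonempty

/-- `D` satisfies the Uniform Normal Cone property with constants `β`, `δ`. -/
def UNC (D : Set H) (β δ : ℝ) : Prop :=
  ∀ x ∈ frontier D, ∃ l : H, ‖l‖ = 1 ∧
    ∀ y ∈ frontier D, ‖y - x‖ ≤ δ → ∀ v ∈ normalCone D y, ⟪v, l⟫ ≥ Real.sqrt (1 - β ^ 2)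

/-- The configuration space `ℝ^{(d+1)n}` of `n` globules in `ℝ^d`: each globule is a pair
(center, radius), and the whole space carries the Euclidean (`L²`) norm. -/
abbrev GConf (d n : ℕ) : Type :=
  PiLp 2 (fun _ : Fin n => WithLp 2 (EuclideanSpace ℝ (Fin d) × ℝ))

variable {d n : ℕ}

/-- Center of the `i`-th globule. -/
def gC (x : GConf d n) (i : Fin n) : EuclideanSpace ℝ (Fin d) := (x i).fst

/-- Radius of the `i`-th globule. -/
def gR (x : GConf d n) (i : Fin n) : ℝ := (x i).snd

/-- Build a configuration from a family of (center, radius) pairs. -/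
def mkG (f : Fin n → EuclideanSpace ℝ (Fin d) × ℝ) : GConf d n :=
  (WithLp.equiv 2 _).symm fun i => (WithLp.equiv 2 _).symm (f i)

/-- The set `A_g` of allowed globule configurations: all radii lie in `[r₋, r₊]` and the
globules are pairwise non-intersecting. -/
def Ag (d n : ℕ) (rm rp : ℝ) : Set (GConf d n) :=
  {x | (∀ i, rm ≤ gR x i ∧ gR x i ≤ rp) ∧
    ∀ i j, i ≠ j → ‖gC x i - gC x j‖ ≥ gR x i + gR x j}

/-- The unit normal vector `n_{ij}(x)` to the collision constraint `|x_i−x_j| ≥ x̆_i+x̆_j`,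
at a configuration `x` with `|x_i−x_j| = x̆_i+x̆_j > 0`. -/
def nij (x : GConf d n) (i j : Fin n) : GConf d n :=
  mkG fun k =>
    if k = i then ((2 * (gR x i + gR x j))⁻¹ • (gC x i - gC x j), -(1 / 2 : ℝ))
    else if k = j then ((2 * (gR x i + gR x j))⁻¹ • (gC x j - gC x i), -(1 / 2 : ℝ))
    else 0

/-- The unit normal vector `n_{i+}` to the constraint `x̆_i ≤ r₊`: its only nonzero component
is the radius component of globule `i`, equal to `−1`. -/
def nplus (d n : ℕ) (i : Fin n) : GConf d n :=
  mkG fun k => if k = i then (0, (-1 : ℝ)) else 0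

/-- The unit normal vector `n_{i−}` to the constraint `x̆_i ≥ r₋`: its only nonzero component
is the radius component of globule `i`, equal to `1`. -/
def nminus (d n : ℕ) (i : Fin n) : GConf d n :=
  mkG fun k => if k = i then (0, (1 : ℝ)) else 0

end

/-!
For `α > 0`, a unit vector `v` lies in `normalSet D x α` iff `-‖y - x‖² ≤ 2α⟪v, y - x⟫` for all
`y ∈ D`. A proximal normal `v` at `x ∈ A_g` pairs nonnegatively with every direction that strictly
satisfies the active constraints linearized at `x`, because such directions enter `A_g`.

For `y ∈ A_g` the direction `(y - x) + s • u` is of this kind whenever `s > ‖y - x‖² / (2 r₋²)`,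
where `u` dilates every cluster of touching globules about a root globule and pushes radii off
their active bounds. A path in the contact graph has at most `n - 1` edges, each of length at most
`2 r₊`, so `‖u‖ ≤ 2 r₊ n √n`. Letting `s` decrease to `‖y - x‖² / (2 r₋²)` gives
`⟪v, y - x⟫ ≥ -‖y - x‖² ‖u‖ / (2 r₋²)`, the exterior sphere inequality with
`α = r₋² / (2 r₊ n √n)`, whatever the constant of `v` was. Finally, the unit normal of any active
constraint is a proximal normal, so the normal cone is nonempty.
-/

open Filter Topology

section ExteriorSphere

variable {H : Type*} [NormedAddCommGroup H] [InnerProductSpace ℝ H] {D : Set H} {x v : H}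
  {α : ℝ}

theorem mem_normalSet_iff (hα : 0 < α) :
    v ∈ normalSet D x α ↔ ‖v‖ = 1 ∧ ∀ y ∈ D, -‖y - x‖ ^ 2 ≤ 2 * α * ⟪v, y - x⟫ := by
  have hball : ∀ y : H, ‖v‖ = 1 →
      (y ∉ Metric.ball (x - α • v) α ↔ -‖y - x‖ ^ 2 ≤ 2 * α * ⟪v, y - x⟫) := by
    intro y hv
    have hsq : ‖y - (x - α • v)‖ ^ 2 = ‖y - x‖ ^ 2 + 2 * α * ⟪v, y - x⟫ + α ^ 2 := by
      rw [show y - (x - α • v) = (y - x) + α • v by abel, norm_add_sq_real, norm_smul,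
        real_inner_smul_right, real_inner_comm, Real.norm_eq_abs, abs_of_pos hα, hv]
      ring
    rw [Metric.mem_ball, dist_eq_norm, not_lt, ← sq_le_sq₀ hα.le (norm_nonneg _), hsq]
    constructor <;> intro h <;> linarith
  simp only [normalSet, Set.mem_ofPred_eq, Set.eq_empty_iff_forall_notMem, Set.mem_inter_iff,
    not_and']
  exact and_congr_right fun hv => forall₂_congr fun y _ => hball y hv

theorem normalSet_subset_normalCone (hα : 0 < α) : normalSet D x α ⊆ normalCone D x :=
  Set.subset_biUnion_of_mem (u := fun α => normalSet D x α) (Set.mem_Ioi.mpr hα)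

theorem inner_nonneg_of_mem_normalSet (hα : 0 < α) (hv : v ∈ normalSet D x α) {w : H}
    (hw : ∀ᶠ t in 𝓝[>] (0 : ℝ), x + t • w ∈ D) : 0 ≤ ⟪v, w⟫ := by
  have hvw := ((mem_normalSet_iff hα).mp hv).2
  have hlim : Tendsto (fun t : ℝ => -(t * ‖w‖ ^ 2) / (2 * α)) (𝓝[>] 0) (𝓝 0) := by
    have hcont : Continuous fun t : ℝ => -(t * ‖w‖ ^ 2) / (2 * α) := by fun_prop
    simpa using (hcont.tendsto 0).mono_left nhdsWithin_le_nhds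
  refine le_of_tendsto hlim ?_
  filter_upwards [hw, self_mem_nhdsWithin] with t ht (htpos : 0 < t)
  have := hvw _ ht
  rw [add_sub_cancel_left, norm_smul, real_inner_smul_right, Real.norm_eq_abs,
    abs_of_pos htpos] at this
  rw [div_le_iff₀ (by positivity)]
  nlinarith

end ExteriorSphere

theorem eventually_le_add_mul {a b c : ℝ} (hca : c ≤ a) (hb : a = c → 0 < b) :
    ∀ᶠ t in 𝓝[>] (0 : ℝ), c ≤ a + t * b := by
  rcases hca.eq_or_lt with rfl | hlt
  · filter_upwards [self_mem_nhdsWithin] with t (ht : 0 < t)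
    nlinarith [hb rfl]
  · have hcont : Continuous fun t : ℝ => a + t * b := by fun_prop
    have hlim : Tendsto (fun t : ℝ => a + t * b) (𝓝 0) (𝓝 a) := by simpa using hcont.tendsto 0
    exact nhdsWithin_le_nhds <| (hlim.eventually (eventually_gt_nhds hlt)).mono fun _ h => h.le

section PairConstraint

variable {H : Type*} [NormedAddCommGroup H] [InnerProductSpace ℝ H]

theorem norm_add_mul_inner_div_le {e : H} (he : e ≠ 0) (δ : H) (t : ℝ) :
    ‖e‖ + t * (⟪e, δ⟫ / ‖e‖) ≤ ‖e + t • δ‖ := by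
  have hpos : 0 < ‖e‖ := norm_pos_iff.mpr he
  have hcs := real_inner_le_norm e (e + t • δ)
  rw [inner_add_right, real_inner_smul_right, real_inner_self_eq_norm_sq] at hcs
  have hcancel : ‖e‖ * (t * (⟪e, δ⟫ / ‖e‖)) = t * ⟪e, δ⟫ := by field_simp
  rw [← mul_le_mul_iff_right₀ hpos, mul_add, hcancel]
  nlinarith

theorem eventually_add_mul_le_norm_add_smul {e δ : H} {R ρ : ℝ} (hR : 0 < R) (hle : R ≤ ‖e‖)
    (hact : ‖e‖ = R → R * ρ < ⟪e, δ⟫) : ∀ᶠ t in 𝓝[>] (0 : ℝ), R + t * ρ ≤ ‖e + t • δ‖ := by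
  have he : e ≠ 0 := norm_pos_iff.mp (hR.trans_le hle)
  have hslope : ‖e‖ = R → 0 < ⟪e, δ⟫ / ‖e‖ - ρ := fun h => by
    rw [h, sub_pos, lt_div_iff₀ hR]
    linarith [hact h]
  filter_upwards [eventually_le_add_mul hle hslope] with t ht
  linarith [norm_add_mul_inner_div_le he δ t, mul_sub t (⟪e, δ⟫ / ‖e‖) ρ]

theorem two_mul_add_sq_le_of_le_norm_add {e δ : H} {R Δ : ℝ} (he : ‖e‖ = R) (hnn : 0 ≤ R + Δ)
    (h : R + Δ ≤ ‖e + δ‖) : 2 * R * Δ + Δ ^ 2 ≤ 2 * ⟪e, δ⟫ + ‖δ‖ ^ 2 := by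
  have := pow_le_pow_left₀ hnn h 2
  rw [norm_add_sq_real, he] at this
  nlinarith

end PairConstraint

section Configuration

variable {d n : ℕ}

@[simp] theorem gC_add (x y : GConf d n) (i : Fin n) : gC (x + y) i = gC x i + gC y i := rfl
@[simp] theorem gR_add (x y : GConf d n) (i : Fin n) : gR (x + y) i = gR x i + gR y i := rfl
@[simp] theorem gC_sub (x y : GConf d n) (i : Fin n) : gC (x - y) i = gC x i - gC y i := rfl
@[simp] theorem gR_sub (x y : GConf d n) (i : Fin n) : gR (x - y) i = gR x i - gR y i := rfl
@[simp] theorem gC_smul (t : ℝ) (x : GConf d n) (i : Fin n) : gC (t • x) i = t • gC x i := rfl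
@[simp] theorem gR_smul (t : ℝ) (x : GConf d n) (i : Fin n) : gR (t • x) i = t * gR x i := rfl
@[simp] theorem gC_mkG (f : Fin n → EuclideanSpace ℝ (Fin d) × ℝ) (i : Fin n) :
    gC (mkG f) i = (f i).1 := rfl
@[simp] theorem gR_mkG (f : Fin n → EuclideanSpace ℝ (Fin d) × ℝ) (i : Fin n) :
    gR (mkG f) i = (f i).2 := rfl

@[fun_prop] theorem continuous_gC (i : Fin n) : Continuous fun x : GConf d n => gC x i := by
  unfold gC; fun_prop

@[fun_prop] theorem continuous_gR (i : Fin n) : Continuous fun x : GConf d n => gR x i := by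
  unfold gR; fun_prop

theorem inner_eq_sum_gC_gR (a b : GConf d n) :
    ⟪a, b⟫ = ∑ i, (⟪gC a i, gC b i⟫ + gR a i * gR b i) := by
  rw [PiLp.inner_apply]
  refine Finset.sum_congr rfl fun i _ => ?_
  rw [WithLp.prod_inner_apply]
  simp [gC, gR, RCLike.inner_apply, mul_comm]

theorem norm_sq_eq_sum_gC_gR (a : GConf d n) :
    ‖a‖ ^ 2 = ∑ i, (‖gC a i‖ ^ 2 + gR a i ^ 2) := by
  rw [PiLp.norm_sq_eq_of_L2]
  refine Finset.sum_congr rfl fun i _ => ?_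
  rw [WithLp.prod_norm_sq_eq_of_L2]
  simp [gC, gR, sq_abs]

theorem norm_sq_le_of_forall_gC_gR_le (a : GConf d n) {M : ℝ}
    (h : ∀ i, ‖gC a i‖ ^ 2 + gR a i ^ 2 ≤ M) : ‖a‖ ^ 2 ≤ n * M := by
  rw [norm_sq_eq_sum_gC_gR]
  simpa using Finset.sum_le_sum fun i (_ : i ∈ Finset.univ) => h i

theorem norm_sq_gC_sub_le {i j : Fin n} (hij : i ≠ j) (w : GConf d n) :
    ‖gC w i - gC w j‖ ^ 2 ≤ 2 * ‖w‖ ^ 2 := by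
  have hpair : ‖gC w i‖ ^ 2 + gR w i ^ 2 + (‖gC w j‖ ^ 2 + gR w j ^ 2) ≤ ‖w‖ ^ 2 := by
    rw [norm_sq_eq_sum_gC_gR, ← Finset.sum_pair hij (f := fun k => ‖gC w k‖ ^ 2 + gR w k ^ 2)]
    exact Finset.sum_le_sum_of_subset_of_nonneg (Finset.subset_univ _)
      fun _ _ _ => by positivity
  nlinarith [norm_sub_le (gC w i) (gC w j), norm_nonneg (gC w i - gC w j),
    sq_nonneg (‖gC w i‖ - ‖gC w j‖), sq_nonneg (gR w i), sq_nonneg (gR w j)]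

end Configuration

section AllowedConfigurations

variable {d n : ℕ} {rm rp : ℝ}

theorem isClosed_Ag : IsClosed (Ag d n rm rp) := by
  simp only [Ag, ge_iff_le, Set.ofPred_and, Set.ofPred_forall]
  refine .inter (isClosed_iInter fun i => .inter ?_ ?_)
    (isClosed_iInter fun i => isClosed_iInter fun j => isClosed_iInter fun _ => ?_) <;>
  exact isClosed_le (by fun_prop) (by fun_prop)

theorem exists_active_of_mem_frontier {x : GConf d n} (hx : x ∈ frontier (Ag d n rm rp)) :
    (∃ i, gR x i = rm) ∨ (∃ i, gR x i = rp) ∨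
      ∃ i j, i ≠ j ∧ ‖gC x i - gC x j‖ = gR x i + gR x j := by
  by_contra! ⟨hlo, hhi, hpair⟩
  have hxA : x ∈ Ag d n rm rp := isClosed_Ag.frontier_subset hx
  let S : Set (GConf d n) := {z | (∀ i, rm < gR z i ∧ gR z i < rp) ∧
    ∀ i j, i ≠ j → gR z i + gR z j < ‖gC z i - gC z j‖}
  have hS : IsOpen S := by
    simp only [S, Set.ofPred_and, Set.ofPred_forall]
    refine .inter (isOpen_iInter_of_finite fun i => .inter ?_ ?_)
      (isOpen_iInter_of_finite fun i => isOpen_iInter_of_finite fun j =>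
        isOpen_iInter_of_finite fun _ => ?_) <;>
    exact isOpen_lt (by fun_prop) (by fun_prop)
  have hSA : S ⊆ Ag d n rm rp := fun z hz =>
    ⟨fun i => ⟨(hz.1 i).1.le, (hz.1 i).2.le⟩, fun i j hij => (hz.2 i j hij).le⟩
  have hxS : x ∈ S := ⟨fun i => ⟨(hxA.1 i).1.lt_of_ne' (hlo i), (hxA.1 i).2.lt_of_ne (hhi i)⟩,
    fun i j hij => (hxA.2 i j hij).lt_of_ne' (hpair i j hij)⟩
  exact hx.2 (interior_maximal hSA hS hxS)

/-- `w` strictly satisfies the constraints of `Ag` that are active at `x`, linearized at `x`. -/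
def IsInwardDir (rm rp : ℝ) (x w : GConf d n) : Prop :=
  (∀ i, gR x i = rm → 0 < gR w i) ∧ (∀ i, gR x i = rp → gR w i < 0) ∧
    ∀ i j, i ≠ j → ‖gC x i - gC x j‖ = gR x i + gR x j →
      (gR x i + gR x j) * (gR w i + gR w j) < ⟪gC x i - gC x j, gC w i - gC w j⟫

theorem eventually_add_smul_mem_Ag (h0 : 0 < rm) {x w : GConf d n} (hx : x ∈ Ag d n rm rp)
    (hw : IsInwardDir rm rp x w) : ∀ᶠ t in 𝓝[>] (0 : ℝ), x + t • w ∈ Ag d n rm rp := by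
  obtain ⟨hlo, hhi, hpair⟩ := hw
  have hlo' : ∀ᶠ t in 𝓝[>] (0 : ℝ), ∀ i, rm ≤ gR x i + t * gR w i :=
    eventually_all.mpr fun i => eventually_le_add_mul (hx.1 i).1 fun h => hlo i h
  have hhi' : ∀ᶠ t in 𝓝[>] (0 : ℝ), ∀ i, -rp ≤ -gR x i + t * -gR w i :=
    eventually_all.mpr fun i => eventually_le_add_mul (neg_le_neg (hx.1 i).2)
      fun h => neg_pos.mpr (hhi i (neg_inj.mp h))
  have hpair' : ∀ᶠ t in 𝓝[>] (0 : ℝ), ∀ i j, i ≠ j →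
      gR x i + gR x j + t * (gR w i + gR w j) ≤ ‖gC x i - gC x j + t • (gC w i - gC w j)‖ := by
    refine eventually_all.mpr fun i => eventually_all.mpr fun j => ?_
    by_cases hij : i = j
    · exact .of_forall fun _ h => absurd hij h
    have hR : 0 < gR x i + gR x j := by linarith [(hx.1 i).1, (hx.1 j).1]
    exact (eventually_add_mul_le_norm_add_smul hR (hx.2 i j hij) (hpair i j hij)).mono
      fun _ h _ => h
  filter_upwards [hlo', hhi', hpair'] with t hlo' hhi' hpair'
  refine ⟨fun i => ⟨?_, ?_⟩, fun i j hij => ?_⟩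
  · simpa only [gR_add, gR_smul] using hlo' i
  · simp only [gR_add, gR_smul]; linarith [hhi' i]
  have hsplit : gC (x + t • w) i - gC (x + t • w) j = gC x i - gC x j + t • (gC w i - gC w j) := by
    simp only [gC_add, gC_smul, smul_sub]; abel
  rw [hsplit, ge_iff_le]
  simpa [mul_add, add_add_add_comm] using hpair' i j hij

theorem le_inner_gC_sub_of_active (h0 : 0 < rm) {x y : GConf d n}
    (hy : y ∈ Ag d n rm rp) {i j : Fin n} (hij : i ≠ j)
    (hact : ‖gC x i - gC x j‖ = gR x i + gR x j) :
    (gR x i + gR x j) * (gR (y - x) i + gR (y - x) j) - ‖y - x‖ ^ 2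
      ≤ ⟪gC x i - gC x j, gC (y - x) i - gC (y - x) j⟫ := by
  have hfeas : gR x i + gR x j + (gR (y - x) i + gR (y - x) j)
      ≤ ‖gC x i - gC x j + (gC (y - x) i - gC (y - x) j)‖ := by
    have hC : gC x i - gC x j + (gC (y - x) i - gC (y - x) j) = gC y i - gC y j := by
      simp only [gC_sub]; abel
    have hR : gR x i + gR x j + (gR (y - x) i + gR (y - x) j) = gR y i + gR y j := by
      simp only [gR_sub]; ring
    rw [hC, hR]
    exact hy.2 i j hij
  have hnn : 0 ≤ gR x i + gR x j + (gR (y - x) i + gR (y - x) j) := by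
    simp only [gR_sub]; linarith [(hy.1 i).1, (hy.1 j).1]
  have := two_mul_add_sq_le_of_le_norm_add hact hnn hfeas
  nlinarith [norm_sq_gC_sub_le hij (y - x), sq_nonneg (gR (y - x) i + gR (y - x) j)]

end AllowedConfigurations

noncomputable section Spreading

variable {d n : ℕ} {rm rp : ℝ}

def contactGraph (x : GConf d n) : SimpleGraph (Fin n) where
  Adj i j := i ≠ j ∧ ‖gC x i - gC x j‖ = gR x i + gR x j
  symm := ⟨fun _ _ h => ⟨h.1.symm, by rw [norm_sub_rev, add_comm]; exact h.2⟩⟩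
  loopless := ⟨fun _ h => h.1 rfl⟩

theorem contactGraph_adj {x : GConf d n} {i j : Fin n} :
    (contactGraph x).Adj i j ↔ i ≠ j ∧ ‖gC x i - gC x j‖ = gR x i + gR x j :=
  Iff.rfl

def contactRoot (x : GConf d n) (i : Fin n) : Fin n :=
  ((contactGraph x).connectedComponentMk i).out

theorem contactRoot_eq_of_adj {x : GConf d n} {i j : Fin n} (h : (contactGraph x).Adj i j) :
    contactRoot x i = contactRoot x j := by
  rw [contactRoot, contactRoot, SimpleGraph.ConnectedComponent.connectedComponentMk_eq_of_adj h]

theorem reachable_contactRoot (x : GConf d n) (i : Fin n) :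
    (contactGraph x).Reachable (contactRoot x i) i :=
  SimpleGraph.ConnectedComponent.eq.mp ((contactGraph x).connectedComponentMk i).out_eq

theorem norm_gC_sub_le_of_walk {x : GConf d n} (hx : x ∈ Ag d n rm rp) {i j : Fin n}
    (p : (contactGraph x).Walk i j) : ‖gC x i - gC x j‖ ≤ 2 * rp * p.length := by
  induction p with
  | nil => simp
  | @cons i k j hik _ ih =>
    have hedge : ‖gC x i - gC x k‖ ≤ 2 * rp := by
      rw [(contactGraph_adj.mp hik).2]; linarith [(hx.1 i).2, (hx.1 k).2]
    calc ‖gC x i - gC x j‖ ≤ ‖gC x i - gC x k‖ + ‖gC x k - gC x j‖ :=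
          norm_sub_le_norm_sub_add_norm_sub _ _ _
      _ ≤ 2 * rp * _ := by rw [SimpleGraph.Walk.length_cons]; push_cast; linarith

theorem norm_gC_sub_contactRoot_le {x : GConf d n} (hx : x ∈ Ag d n rm rp) (hrp : 0 ≤ rp)
    (i : Fin n) : ‖gC x i - gC x (contactRoot x i)‖ ≤ 2 * rp * (n - 1) := by
  obtain ⟨p⟩ := reachable_contactRoot x i
  have hlen : (p.toPath.1.length : ℝ) ≤ n - 1 := by
    have := p.toPath.2.length_lt
    rw [Fintype.card_fin] at this
    rw [le_sub_iff_add_le]; exact_mod_cast this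
  rw [norm_sub_rev]
  exact (norm_gC_sub_le_of_walk hx p.toPath.1).trans (by gcongr)

def spreadRadius (rm rp : ℝ) (x : GConf d n) (i : Fin n) : ℝ :=
  if gR x i = rm then rm / 2 else if gR x i = rp then -(rm / 2) else 0

theorem abs_spreadRadius_le (h0 : 0 < rm) (x : GConf d n) (i : Fin n) :
    |spreadRadius rm rp x i| ≤ rm / 2 := by
  unfold spreadRadius
  split_ifs <;> rw [abs_le] <;> constructor <;> linarith

/-- Each contact cluster is dilated about its root: touching globules share their root, so their
centers separate at the rate of their center distance. -/
def spread (rm rp : ℝ) (x : GConf d n) : GConf d n :=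
  mkG fun i => (gC x i - gC x (contactRoot x i), spreadRadius rm rp x i)

theorem norm_spread_le (h0 : 0 < rm) (hr : rm < rp) {x : GConf d n} (hx : x ∈ Ag d n rm rp) :
    ‖spread rm rp x‖ ≤ 2 * rp * n * √n := by
  have hrp : 0 < rp := h0.trans hr
  have hcomp : ∀ i,
      ‖gC (spread rm rp x) i‖ ^ 2 + gR (spread rm rp x) i ^ 2 ≤ (2 * rp * n) ^ 2 := by
    intro i
    have hn : (1 : ℝ) ≤ n := by exact_mod_cast i.pos
    have hC := norm_gC_sub_contactRoot_le hx hrp.le i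
    have hR := abs_spreadRadius_le (rp := rp) h0 x i
    simp only [spread, gC_mkG, gR_mkG]
    nlinarith [norm_nonneg (gC x i - gC x (contactRoot x i)), sq_abs (spreadRadius rm rp x i),
      abs_nonneg (spreadRadius rm rp x i)]
  rw [← pow_le_pow_iff_left₀ (norm_nonneg _) (by positivity) two_ne_zero]
  calc ‖spread rm rp x‖ ^ 2 ≤ n * (2 * rp * n) ^ 2 := norm_sq_le_of_forall_gC_gR_le _ hcomp
    _ = (2 * rp * n * √n) ^ 2 := by rw [mul_pow _ √n, Real.sq_sqrt n.cast_nonneg]; ring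

theorem isInwardDir_spread (h0 : 0 < rm) (hr : rm < rp) {x y : GConf d n}
    (hx : x ∈ Ag d n rm rp) (hy : y ∈ Ag d n rm rp) {ε : ℝ} (hε : 0 < ε) :
    IsInwardDir rm rp x (y - x + (‖y - x‖ ^ 2 / (2 * rm ^ 2) + ε) • spread rm rp x) := by
  set c := ‖y - x‖ ^ 2 / (2 * rm ^ 2)
  have hc : c * (2 * rm ^ 2) = ‖y - x‖ ^ 2 := div_mul_cancel₀ _ (by positivity)
  have hs : 0 < c + ε := by positivity
  refine ⟨fun i hi => ?_, fun i hi => ?_, fun i j hij hact => ?_⟩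
  · have : spreadRadius rm rp x i = rm / 2 := by simp [spreadRadius, hi]
    simp only [gR_add, gR_sub, gR_smul, spread, gR_mkG, this, hi]
    nlinarith [(hy.1 i).1]
  · have : spreadRadius rm rp x i = -(rm / 2) := by simp [spreadRadius, hi, hr.ne']
    simp only [gR_add, gR_sub, gR_smul, spread, gR_mkG, this, hi]
    nlinarith [(hy.1 i).2]
  · have hkey := le_inner_gC_sub_of_active h0 hy hij hact
    set R := gR x i + gR x j
    set σ := spreadRadius rm rp x i + spreadRadius rm rp x j
    have hR : 2 * rm ≤ R := by linarith [(hx.1 i).1, (hx.1 j).1]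
    have hσ : σ ≤ rm := by
      linarith [(abs_le.mp (abs_spreadRadius_le (rp := rp) h0 x i)).2,
        (abs_le.mp (abs_spreadRadius_le (rp := rp) h0 x j)).2]
    have hroot := contactRoot_eq_of_adj (contactGraph_adj.mpr ⟨hij, hact⟩)
    have hC : gC (y - x + (c + ε) • spread rm rp x) i - gC (y - x + (c + ε) • spread rm rp x) j
        = gC (y - x) i - gC (y - x) j + (c + ε) • (gC x i - gC x j) := by
      simp only [gC_add, gC_smul, spread, gC_mkG, hroot]
      rw [smul_sub, smul_sub, smul_sub]; abel
    have hRad : gR (y - x + (c + ε) • spread rm rp x) i + gR (y - x + (c + ε) • spread rm rp x) j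
        = gR (y - x) i + gR (y - x) j + (c + ε) * σ := by
      simp only [gR_add, gR_smul, spread, gR_mkG, σ]; ring
    rw [hC, hRad, inner_add_right, real_inner_smul_right, real_inner_self_eq_norm_sq, hact]
    have hspread : 2 * rm ^ 2 ≤ R * (R - σ) := by nlinarith
    have hgap : 0 < ε * (2 * rm ^ 2) := by positivity
    nlinarith [mul_le_mul_of_nonneg_left hspread hs.le]

end Spreading

section Normals

variable {d n : ℕ} {rm rp : ℝ}

theorem inner_nminus (i : Fin n) (b : GConf d n) : ⟪nminus d n i, b⟫ = gR b i := by
  simp [inner_eq_sum_gC_gR, nminus, apply_ite]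

theorem norm_nminus (i : Fin n) : ‖nminus d n i‖ = 1 := by
  rw [← pow_eq_one_iff_of_nonneg (norm_nonneg _) two_ne_zero]
  simp [norm_sq_eq_sum_gC_gR, nminus, apply_ite]

theorem inner_nplus (i : Fin n) (b : GConf d n) : ⟪nplus d n i, b⟫ = -gR b i := by
  simp [inner_eq_sum_gC_gR, nplus, apply_ite]

theorem norm_nplus (i : Fin n) : ‖nplus d n i‖ = 1 := by
  rw [← pow_eq_one_iff_of_nonneg (norm_nonneg _) two_ne_zero]
  simp [norm_sq_eq_sum_gC_gR, nplus, apply_ite]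

theorem inner_nij {i j : Fin n} (hij : i ≠ j) (x b : GConf d n) :
    ⟪nij x i j, b⟫ = (2 * (gR x i + gR x j))⁻¹ * ⟪gC x i - gC x j, gC b i - gC b j⟫
      - (gR b i + gR b j) / 2 := by
  rw [inner_eq_sum_gC_gR, Fintype.sum_eq_add i j hij fun k hk => by simp [nij, hk.1, hk.2]]
  simp [nij, hij.symm, real_inner_smul_left, inner_sub_left, inner_sub_right]
  ring

theorem norm_nij {i j : Fin n} (hij : i ≠ j) {x : GConf d n} (hR : 0 < gR x i + gR x j)
    (hact : ‖gC x i - gC x j‖ = gR x i + gR x j) : ‖nij x i j‖ = 1 := by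
  rw [← pow_eq_one_iff_of_nonneg (norm_nonneg _) two_ne_zero, norm_sq_eq_sum_gC_gR,
    Fintype.sum_eq_add i j hij fun k hk => by simp [nij, hk.1, hk.2]]
  simp only [nij, gC_mkG, gR_mkG, ↓reduceIte, if_neg hij.symm]
  rw [norm_smul, norm_smul, norm_sub_rev (gC x j), hact, Real.norm_eq_abs,
    abs_of_pos (by positivity)]
  field_simp
  norm_num

end Normals

section ExteriorSphereAg

variable {d n : ℕ} {rm rp : ℝ}

theorem pos_of_mem_frontier_Ag {x : GConf d n} (hx : x ∈ frontier (Ag d n rm rp)) : 0 < n := by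
  rcases exists_active_of_mem_frontier hx with ⟨i, -⟩ | ⟨i, -⟩ | ⟨i, -⟩ <;> exact i.pos

theorem normalCone_Ag_nonempty (h0 : 0 < rm) {x : GConf d n}
    (hx : x ∈ frontier (Ag d n rm rp)) : (normalCone (Ag d n rm rp) x).Nonempty := by
  have hxA : x ∈ Ag d n rm rp := isClosed_Ag.frontier_subset hx
  rcases exists_active_of_mem_frontier hx with ⟨i, hi⟩ | ⟨i, hi⟩ | ⟨i, j, hij, hact⟩
  · refine ⟨nminus d n i, normalSet_subset_normalCone one_pos <|
      (mem_normalSet_iff one_pos).mpr ⟨norm_nminus i, fun y hy => ?_⟩⟩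
    rw [inner_nminus, gR_sub, hi]
    nlinarith [(hy.1 i).1]
  · refine ⟨nplus d n i, normalSet_subset_normalCone one_pos <|
      (mem_normalSet_iff one_pos).mpr ⟨norm_nplus i, fun y hy => ?_⟩⟩
    rw [inner_nplus, gR_sub, hi]
    nlinarith [(hy.1 i).2]
  · have hR : 0 < gR x i + gR x j := by linarith [(hxA.1 i).1, (hxA.1 j).1]
    refine ⟨nij x i j, normalSet_subset_normalCone hR <|
      (mem_normalSet_iff hR).mpr ⟨norm_nij hij hR hact, fun y hy => ?_⟩⟩
    rw [inner_nij hij, mul_sub, ← mul_assoc, mul_inv_cancel₀ (by positivity), one_mul]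
    linarith [le_inner_gC_sub_of_active h0 hy hij hact]

theorem mem_normalSet_Ag_of_mem_normalCone (hn : 0 < n) (h0 : 0 < rm) (hr : rm < rp)
    {x v : GConf d n} (hx : x ∈ Ag d n rm rp) (hv : v ∈ normalCone (Ag d n rm rp) x) :
    v ∈ normalSet (Ag d n rm rp) x (rm ^ 2 / (2 * rp * n * √n)) := by
  obtain ⟨β, (hβ : 0 < β), hvβ⟩ := Set.mem_iUnion₂.mp hv
  have hrp : 0 < rp := h0.trans hr
  have hK : 0 < 2 * rp * n * √n := by positivity
  have hv1 : ‖v‖ = 1 := ((mem_normalSet_iff hβ).mp hvβ).1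
  refine (mem_normalSet_iff (by positivity)).mpr ⟨hv1, fun y hy => ?_⟩
  set u := spread rm rp x
  set c := ‖y - x‖ ^ 2 / (2 * rm ^ 2)
  have hpos : ∀ ε > 0, 0 ≤ ⟪v, y - x⟫ + (c + ε) * ⟪v, u⟫ := fun ε hε => by
    simpa only [inner_add_right, real_inner_smul_right] using
      inner_nonneg_of_mem_normalSet hβ hvβ <|
        eventually_add_smul_mem_Ag h0 hx (isInwardDir_spread h0 hr hx hy hε)
  have hlim : Tendsto (fun ε : ℝ => ⟪v, y - x⟫ + (c + ε) * ⟪v, u⟫) (𝓝[>] 0)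
      (𝓝 (⟪v, y - x⟫ + c * ⟪v, u⟫)) := by
    have hcont : Continuous fun ε : ℝ => ⟪v, y - x⟫ + (c + ε) * ⟪v, u⟫ := by fun_prop
    simpa using (hcont.tendsto 0).mono_left nhdsWithin_le_nhds
  have hlimit := ge_of_tendsto hlim (eventually_nhdsWithin_of_forall hpos)
  have hu : ⟪v, u⟫ ≤ 2 * rp * n * √n :=
    (real_inner_le_norm v u).trans (by rw [hv1, one_mul]; exact norm_spread_le h0 hr hx)
  have hc : 0 ≤ c := by positivity
  have hc2 : c * (2 * rm ^ 2) = ‖y - x‖ ^ 2 := div_mul_cancel₀ _ (by positivity)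
  calc -‖y - x‖ ^ 2 = 2 * (rm ^ 2 / (2 * rp * n * √n)) * -(c * (2 * rp * n * √n)) := by
        rw [← hc2]; field_simp
    _ ≤ 2 * (rm ^ 2 / (2 * rp * n * √n)) * ⟪v, y - x⟫ := by
        gcongr
        nlinarith [mul_le_mul_of_nonneg_left hu hc]

end ExteriorSphereAg

theorem stmt_8_general (d n : ℕ) (rm rp : ℝ)
    (h0 : 0 < rm) (hr : rm < rp) :
    UES (Ag d n rm rp) (rm ^ 2 / (2 * rp * n * Real.sqrt n)) := by
  intro x hx
  have hn : 0 < n := pos_of_mem_frontier_Ag hx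
  have hα : 0 < rm ^ 2 / (2 * rp * n * √n) := by
    have := h0.trans hr
    positivity
  have hcone : normalCone (Ag d n rm rp) x = normalSet (Ag d n rm rp) x _ :=
    Set.Subset.antisymm (fun _ => mem_normalSet_Ag_of_mem_normalCone hn h0 hr
      (isClosed_Ag.frontier_subset hx)) (normalSet_subset_normalCone hα)
  exact ⟨hcone, hcone ▸ normalCone_Ag_nonempty h0 hx⟩

/-- The set `A_g` of allowed globule configurations satisfies the Uniform
Exterior Sphere property with constant `α = r₋²/(2 r₊ n √n)`. -/
theorem stmt_8 (d n : ℕ) (hd : 2 ≤ d) (hn : 1 ≤ n) (rm rp : ℝ)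
    (h0 : 0 < rm) (hr : rm < rp) :
    UES (Ag d n rm rp) (rm ^ 2 / (2 * rp * n * Real.sqrt n)) :=
  stmt_8_general d n rm rp h0 hr
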